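/- arXiv:2306.00727 — 7 statements merged into one kernel-verified Lean document; each statement's English description precedes it below -/
import Mathlib

section
/- For any metric space Z, the function d(c,c') = ∫_ℝ d_Z(c(t),c'(t)) / (2 e^{|t|}) dt defines a metric on the set of generalized geodesics in Z (continuous maps c : ℝ → Z that restrict to an isometric embedding on some closed interval and are locally constant on its complement), provided Z is nonempty; in particular the integral is always finite. -/
/-!
A generalized geodesic `c` is constant on each closed ray complementary to its interval `I`
(it is continuous and locally constant on the open ray, which is connected), so it factors
through the nearest-point retraction of `ℝ` onto `I`; as this retraction is 1-Lipschitz and `c`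
is isometric on `I`, `c` is 1-Lipschitz. Hence `d_Z(c(t), c'(t))` grows at most linearly in `|t|`,
which the weight `e^{-|t|}` beats, even after giving up half of it: `|t| ≤ 2 e^{|t|/2}`. The metric
axioms then pass pointwise through the integral, and definiteness holds because the integrand
is continuous.
-/

open MeasureTheory

/-- A generalized geodesic in a metric space `Z`: a continuous map `c : ℝ → Z` whose
restriction to some interval (of the form `[a,b]`, `[a,∞)`, `(−∞,b]` or `ℝ`) is an
isometric embedding and which is locally constant on the complement of this interval. -/
def IsGenGeodesic {Z : Type*} [MetricSpace Z] (c : ℝ → Z) : Prop :=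
  Continuous c ∧
  ∃ I : Set ℝ,
    ((∃ a b : ℝ, a ≤ b ∧ I = Set.Icc a b) ∨ (∃ a : ℝ, I = Set.Ici a) ∨
      (∃ b : ℝ, I = Set.Iic b) ∨ I = Set.univ) ∧
    (∀ s ∈ I, ∀ t ∈ I, dist (c s) (c t) = |s - t|) ∧
    (∀ t ∉ I, ∃ ε > 0, ∀ s : ℝ, |s - t| < ε → c s = c t)

/-- The distance on the space of generalized geodesics. -/
noncomputable def dFS {Z : Type*} [MetricSpace Z] (c c' : ℝ → Z) : ℝ :=
  ∫ t : ℝ, dist (c t) (c' t) / (2 * Real.exp |t|)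

open Real Set Filter Topology
open scoped NNReal

theorem IsPreconnected.apply_eq_of_eventually_eq {X Y : Type*} [TopologicalSpace X]
    [TopologicalSpace Y] [T2Space Y] {U : Set X} (hU : IsPreconnected U) {f : X → Y}
    (hf : Continuous f) (hloc : ∀ x ∈ U, ∀ᶠ y in 𝓝 x, f y = f x) {x y : X}
    (hx : x ∈ closure U) (hy : y ∈ closure U) : f x = f y := by
  obtain ⟨u, hu⟩ := closure_nonempty_iff.mp ⟨x, hx⟩
  have hconst : IsLocallyConstant fun z : U => f z :=
    (IsLocallyConstant.iff_eventually_eq _).2 fun z =>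
      (continuous_subtype_val.tendsto z).eventually (hloc z z.2)
  have : PreconnectedSpace U := isPreconnected_iff_preconnectedSpace.mp hU
  have hclosed : closure U ⊆ {z | f z = f u} :=
    closure_minimal (fun v hv => hconst.apply_eq_of_preconnectedSpace ⟨v, hv⟩ ⟨u, hu⟩)
      (isClosed_eq hf continuous_const)
  exact (hclosed hx).trans (hclosed hy).symm

theorem integrable_exp_neg_mul_abs {b : ℝ} (hb : 0 < b) :
    Integrable fun t : ℝ => exp (-b * |t|) := by
  simpa using (integrable_fun_norm_addHaar (volume : Measure ℝ) (f := fun y => exp (-b * y))).2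
    (by simpa using exp_neg_integrableOn_Ioi 0 hb)

theorem LipschitzWith.integrable_div_exp_abs {g : ℝ → ℝ} {K : ℝ≥0} (hg : LipschitzWith K g) :
    Integrable fun t => g t / exp |t| := by
  have hbound : ∀ t, |g t| ≤ (|g 0| + 2 * K) * exp (|t| / 2) := fun t => by
    have hlip : |g t| ≤ |g 0| + K * |t| := by
      have := hg.dist_le_mul t 0
      rw [Real.dist_eq, Real.dist_eq, sub_zero] at this
      linarith [abs_sub_abs_le_abs_sub (g t) (g 0)]
    have h1 : 1 ≤ exp (|t| / 2) := one_le_exp (by positivity)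
    have h2 : |t| ≤ 2 * exp (|t| / 2) := by linarith [add_one_le_exp (|t| / 2)]
    nlinarith [abs_nonneg (g 0), K.2]
  refine ((integrable_exp_neg_mul_abs one_half_pos).const_mul (|g 0| + 2 * K)).mono'
    (hg.continuous.div (by fun_prop) fun t => (exp_pos _).ne').aestronglyMeasurable
    (ae_of_all _ fun t => ?_)
  rw [norm_div, norm_eq_abs, norm_of_nonneg (exp_pos _).le, div_le_iff₀ (exp_pos _)]
  calc |g t| ≤ (|g 0| + 2 * K) * exp (|t| / 2) := hbound t
    _ = (|g 0| + 2 * K) * exp (-(1 / 2) * |t|) * exp |t| := by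
      rw [mul_assoc, ← exp_add]; ring_nf

theorem lipschitzWith_one_of_eq_comp_retraction {Z : Type*} [PseudoMetricSpace Z] {c : ℝ → Z}
    {I : Set ℝ} (hiso : ∀ s ∈ I, ∀ t ∈ I, dist (c s) (c t) = |s - t|) {p : ℝ → ℝ}
    (hp : LipschitzWith 1 p) (hpI : ∀ t, p t ∈ I) (hcp : ∀ t, c (p t) = c t) :
    LipschitzWith 1 c :=
  LipschitzWith.of_dist_le_mul fun s t => by
    rw [← hcp s, ← hcp t, hiso _ (hpI s) _ (hpI t), ← Real.dist_eq]
    exact hp.dist_le_mul s t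

theorem IsGenGeodesic.lipschitzWith {Z : Type*} [MetricSpace Z] {c : ℝ → Z}
    (h : IsGenGeodesic c) : LipschitzWith 1 c := by
  obtain ⟨hc, I, hI, hiso, hloc⟩ := h
  have hloc' : ∀ t ∉ I, ∀ᶠ s in 𝓝 t, c s = c t := fun t ht => by
    obtain ⟨ε, hε, hε'⟩ := hloc t ht
    exact Metric.eventually_nhds_iff.2 ⟨ε, hε, fun s hs => hε' s hs⟩
  have const_right : ∀ b, Ioi b ⊆ Iᶜ → ∀ t, b ≤ t → c b = c t := fun b hb t ht =>
    isPreconnected_Ioi.apply_eq_of_eventually_eq hc (fun s hs => hloc' s (hb hs))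
      (by simp [closure_Ioi]) (by simpa [closure_Ioi] using ht)
  have const_left : ∀ a, Iio a ⊆ Iᶜ → ∀ t, t ≤ a → c a = c t := fun a ha t ht =>
    isPreconnected_Iio.apply_eq_of_eventually_eq hc (fun s hs => hloc' s (ha hs))
      (by simp [closure_Iio]) (by simpa [closure_Iio] using ht)
  rcases hI with ⟨a, b, hab, rfl⟩ | ⟨a, rfl⟩ | ⟨b, rfl⟩ | rfl
  · refine lipschitzWith_one_of_eq_comp_retraction hiso
      (p := fun t => max a (min t b)) ((LipschitzWith.id.min_const b).const_max a)
      (fun t => ⟨le_max_left _ _, max_le hab (min_le_right _ _)⟩) fun t => ?_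
    obtain ht | ht := le_total t a
    · rw [max_eq_left ((min_le_left t b).trans ht)]
      exact const_left a (fun s hs h => not_le.2 hs h.1) t ht
    obtain ht' | ht' := le_total t b
    · rw [min_eq_left ht', max_eq_right ht]
    · rw [min_eq_right ht', max_eq_right hab]
      exact const_right b (fun s hs h => not_le.2 hs h.2) t ht'
  · refine lipschitzWith_one_of_eq_comp_retraction hiso (p := fun t => max a t)
      (LipschitzWith.id.const_max a) (fun t => le_max_left a t) fun t => ?_
    obtain ht | ht := le_total t a
    · rw [max_eq_left ht]
      exact const_left a (fun s hs h => not_le.2 hs (mem_Ici.1 h)) t ht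
    · rw [max_eq_right ht]
  · refine lipschitzWith_one_of_eq_comp_retraction hiso (p := fun t => min t b)
      (LipschitzWith.id.min_const b) (fun t => min_le_right t b) fun t => ?_
    obtain ht | ht := le_total t b
    · rw [min_eq_left ht]
    · rw [min_eq_right ht]
      exact const_right b (fun s hs h => not_le.2 hs (mem_Iic.1 h)) t ht
  · exact lipschitzWith_one_of_eq_comp_retraction hiso LipschitzWith.id (fun t => mem_univ t)
      fun t => rfl

theorem integrable_dist_div_two_mul_exp_abs {Z : Type*} [PseudoMetricSpace Z] {c c' : ℝ → Z}
    {K K' : ℝ≥0} (hc : LipschitzWith K c) (hc' : LipschitzWith K' c') :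
    Integrable fun t => dist (c t) (c' t) / (2 * exp |t|) := by
  simpa [div_div, mul_comm] using
    (LipschitzWith.dist.comp (hc.prodMk hc')).integrable_div_exp_abs.div_const 2

section

variable {Z : Type*} [MetricSpace Z] {c c' c'' : ℝ → Z} {K K' K'' : ℝ≥0}

theorem eq_of_dFS_eq_zero (hc : LipschitzWith K c) (hc' : LipschitzWith K' c')
    (h : dFS c c' = 0) : c = c' := by
  have hae := (integral_eq_zero_iff_of_nonneg (fun t => by positivity)
    (integrable_dist_div_two_mul_exp_abs hc hc')).1 h
  have hzero := (Continuous.ae_eq_iff_eq volume ((hc.continuous.dist hc'.continuous).div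
    (by fun_prop) fun t => by positivity) continuous_const).1 hae
  funext t
  have ht : dist (c t) (c' t) / (2 * exp |t|) = 0 := congrFun hzero t
  simpa [(exp_pos _).ne'] using ht

theorem dFS_triangle (hc : LipschitzWith K c) (hc' : LipschitzWith K' c')
    (hc'' : LipschitzWith K'' c'') : dFS c c'' ≤ dFS c c' + dFS c' c'' := by
  have h₁ := integrable_dist_div_two_mul_exp_abs hc hc'
  have h₂ := integrable_dist_div_two_mul_exp_abs hc' hc''
  rw [dFS, dFS, dFS, ← integral_add h₁ h₂]
  refine integral_mono (integrable_dist_div_two_mul_exp_abs hc hc'') (h₁.add h₂) fun t => ?_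
  rw [← add_div]
  gcongr
  exact dist_triangle _ _ _

end

theorem dFS_is_metric_general {Z : Type*} [MetricSpace Z] :
    (∀ c c' : ℝ → Z, IsGenGeodesic c → IsGenGeodesic c' →
      Integrable (fun t : ℝ => dist (c t) (c' t) / (2 * Real.exp |t|))) ∧
    (∀ c c' : ℝ → Z, IsGenGeodesic c → IsGenGeodesic c' → 0 ≤ dFS c c') ∧
    (∀ c : ℝ → Z, IsGenGeodesic c → dFS c c = 0) ∧
    (∀ c c' : ℝ → Z, IsGenGeodesic c → IsGenGeodesic c' → dFS c c' = dFS c' c) ∧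
    (∀ c c' : ℝ → Z, IsGenGeodesic c → IsGenGeodesic c' → dFS c c' = 0 → c = c') ∧
    (∀ c c' c'' : ℝ → Z, IsGenGeodesic c → IsGenGeodesic c' → IsGenGeodesic c'' →
      dFS c c'' ≤ dFS c c' + dFS c' c'') :=
  ⟨fun _ _ h h' => integrable_dist_div_two_mul_exp_abs h.lipschitzWith h'.lipschitzWith,
    fun _ _ _ _ => integral_nonneg fun _ => by positivity,
    fun _ _ => by simp [dFS],
    fun _ _ _ _ => by simp only [dFS, dist_comm],
    fun _ _ h h' => eq_of_dFS_eq_zero h.lipschitzWith h'.lipschitzWith,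
    fun _ _ _ h h' h'' => dFS_triangle h.lipschitzWith h'.lipschitzWith h''.lipschitzWith⟩

/-- `dFS` defines a metric on the set of generalized geodesics; in particular the
integrand is always integrable. -/
theorem dFS_is_metric {Z : Type*} [MetricSpace Z] [Nonempty Z] :
    (∀ c c' : ℝ → Z, IsGenGeodesic c → IsGenGeodesic c' →
      Integrable (fun t : ℝ => dist (c t) (c' t) / (2 * Real.exp |t|))) ∧
    (∀ c c' : ℝ → Z, IsGenGeodesic c → IsGenGeodesic c' → 0 ≤ dFS c c') ∧
    (∀ c : ℝ → Z, IsGenGeodesic c → dFS c c = 0) ∧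
    (∀ c c' : ℝ → Z, IsGenGeodesic c → IsGenGeodesic c' → dFS c c' = dFS c' c) ∧
    (∀ c c' : ℝ → Z, IsGenGeodesic c → IsGenGeodesic c' → dFS c c' = 0 → c = c') ∧
    (∀ c c' c'' : ℝ → Z, IsGenGeodesic c → IsGenGeodesic c' → IsGenGeodesic c'' →
      dFS c c'' ≤ dFS c c' + dFS c' c'') :=
  dFS_is_metric_general
end

section
/- Approximate triangle inequality for the V-foliated distance, uniform in V: let G be a locally compact group with left-invariant proper metric d_G and fix α ≥ 0. Then for every ε > 0 there is δ > 0 such that for every closed subgroup V of G and all g, g', g'' ∈ G: if fol_V(g,g') ≤ (α,δ) and fol_V(g',g'') ≤ (α,δ) then fol_V(g,g'') ≤ (2α, ε). -/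
/-!
Take `v₁ * v₂` as the witness. Left invariance makes `d(1, ·)` subadditive, so its length is at
most `2α`. Its defect splits as `d(g v₁ v₂, g' v₂) + d(g' v₂, g'')`, and the first term is small
because right multiplication by the compact ball `closedBall 1 α` is uniformly continuous; this
uniformity is what makes `δ` independent of `V`.
-/

open Filter Topology Metric

section

variable {G : Type*} [Group G] [PseudoMetricSpace G]

theorem eventually_forall_dist_mul_self_lt [ContinuousMul G] {K : Set G} (hK : IsCompact K)
    {ε : ℝ} (hε : 0 < ε) : ∀ᶠ w in 𝓝 (1 : G), ∀ k ∈ K, dist (w * k) k < ε := by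
  refine hK.eventually_forall_of_forall_eventually fun k _ ↦ ?_
  have hcont : Continuous fun z : G × G ↦ dist (z.1 * z.2) z.2 :=
    (continuous_fst.mul continuous_snd).dist continuous_snd
  exact hcont.continuousAt.eventually_lt continuousAt_const (by simpa using hε)

variable [IsIsometricSMul G G]

theorem dist_one_mul_le (a b : G) : dist 1 (a * b) ≤ dist 1 a + dist 1 b :=
  calc dist 1 (a * b) ≤ dist 1 a + dist a (a * b) := dist_triangle _ _ _
    _ = dist 1 a + dist 1 b := by rw [← dist_mul_left a 1 b, mul_one]

theorem exists_pos_forall_dist_mul_right_lt [ContinuousMul G] {K : Set G} (hK : IsCompact K)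
    {ε : ℝ} (hε : 0 < ε) :
    ∃ δ > 0, ∀ x y : G, dist x y ≤ δ → ∀ k ∈ K, dist (x * k) (y * k) < ε := by
  obtain ⟨δ, hδ, hsmall⟩ :=
    nhds_basis_closedBall.eventually_iff.mp (eventually_forall_dist_mul_self_lt hK hε)
  refine ⟨δ, hδ, fun x y hxy k hk ↦ ?_⟩
  have hw : x⁻¹ * y ∈ closedBall 1 δ := by
    rwa [mem_closedBall, dist_comm, ← dist_mul_left x, mul_one, mul_inv_cancel_left]
  calc dist (x * k) (y * k) = dist k (x⁻¹ * y * k) := by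
        rw [← dist_mul_left x⁻¹, inv_mul_cancel_left, ← mul_assoc]
    _ < ε := by rw [dist_comm]; exact hsmall hw k hk

end

theorem folV_triangle_general {G : Type*} [Group G] [MetricSpace G] [IsTopologicalGroup G]
    [ProperSpace G]
    (hleft : ∀ g a b : G, dist (g * a) (g * b) = dist a b)
    (α : ℝ) :
    ∀ ε > 0, ∃ δ > 0, ∀ V : Subgroup G, IsClosed (V : Set G) → ∀ g g' g'' : G,
      (∃ v ∈ V, dist (1 : G) v ≤ α ∧ dist (g * v) g' ≤ δ) →
      (∃ v ∈ V, dist (1 : G) v ≤ α ∧ dist (g' * v) g'' ≤ δ) →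
      (∃ v ∈ V, dist (1 : G) v ≤ 2 * α ∧ dist (g * v) g'' ≤ ε) := by
  have : IsIsometricSMul G G := ⟨fun g ↦ Isometry.of_dist_eq (hleft g)⟩
  intro ε hε
  obtain ⟨δ, hδ, hmul⟩ :=
    exists_pos_forall_dist_mul_right_lt (isCompact_closedBall (1 : G) α) (half_pos hε)
  refine ⟨min δ (ε / 2), lt_min hδ (half_pos hε), fun V _ g g' g'' ↦ ?_⟩
  rintro ⟨v₁, hv₁, hv₁α, hgg'⟩ ⟨v₂, hv₂, hv₂α, hg'g''⟩
  refine ⟨v₁ * v₂, V.mul_mem hv₁ hv₂, ?_, ?_⟩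
  · linarith [dist_one_mul_le v₁ v₂]
  · have hshift : dist (g * v₁ * v₂) (g' * v₂) < ε / 2 :=
      hmul _ _ (hgg'.trans (min_le_left _ _)) v₂ (by rwa [mem_closedBall, dist_comm])
    calc dist (g * (v₁ * v₂)) g''
        ≤ dist (g * v₁ * v₂) (g' * v₂) + dist (g' * v₂) g'' := by
          rw [← mul_assoc]; exact dist_triangle _ _ _
      _ ≤ ε / 2 + ε / 2 := add_le_add hshift.le (hg'g''.trans (min_le_right _ _))
      _ = ε := add_halves ε

/-- Approximate triangle inequality for the `V`-foliated distance, uniform in `V`. -/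
theorem folV_triangle {G : Type*} [Group G] [MetricSpace G] [IsTopologicalGroup G]
    [ProperSpace G] [SecondCountableTopology G]
    (hleft : ∀ g a b : G, dist (g * a) (g * b) = dist a b)
    (α : ℝ) (hα : 0 ≤ α) :
    ∀ ε > 0, ∃ δ > 0, ∀ V : Subgroup G, IsClosed (V : Set G) → ∀ g g' g'' : G,
      (∃ v ∈ V, dist (1 : G) v ≤ α ∧ dist (g * v) g' ≤ δ) →
      (∃ v ∈ V, dist (1 : G) v ≤ α ∧ dist (g' * v) g'' ≤ δ) →
      (∃ v ∈ V, dist (1 : G) v ≤ 2 * α ∧ dist (g * v) g'' ≤ ε) :=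
  folV_triangle_general hleft α
end

section
/- Let Z be a compact metric space with a continuous flow Φ, let α̂ > 0, let K ⊆ Z be compact and U an open neighborhood of K. Then there exists a continuous function f : Z → [0,1] such that: (1) f ≡ 1 on K; (2) f ≡ 0 outside Φ_{[−α̂,α̂]}(U); (3) for all s ∈ ℝ and z ∈ Z, |f(Φ_s(z)) − f(z)| ≤ |s|/α̂. -/
/-!
Take an Urysohn function `φ` equal to `1` on `K` and `0` off `U`, and set
`f z = sup_{|t| ≤ a} (1 - |t|/a) φ(Φ_t z)`. Continuity comes from taking a supremum over the
compact window `[-a, a]`. Flowing for time `s` shifts the window by `s`, and the tent weight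
`1 - |t|/a` is `1/a`-Lipschitz and vanishes at the ends of the window, so `f` changes by at most
`|s|/a`.
-/

open Set

noncomputable section

def tent (a t : ℝ) : ℝ := max 0 (1 - |t| / a)

lemma tent_nonneg (a t : ℝ) : 0 ≤ tent a t := le_max_left _ _

lemma tent_le_one {a : ℝ} (ha : 0 ≤ a) (t : ℝ) : tent a t ≤ 1 :=
  max_le zero_le_one (by linarith [div_nonneg (abs_nonneg t) ha])

lemma tent_zero (a : ℝ) : tent a 0 = 1 := by simp [tent]

lemma tent_eq_zero_of_notMem_Icc {a t : ℝ} (ha : 0 < a) (ht : t ∉ Icc (-a) a) : tent a t = 0 := by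
  have : a ≤ |t| := by
    by_contra! h
    exact ht (abs_le.mp h.le)
  exact max_eq_left (by linarith [(le_div_iff₀ ha).mpr (by linarith : 1 * a ≤ |t|)])

lemma tent_le_tent_add {a : ℝ} (ha : 0 ≤ a) (t u : ℝ) : tent a t ≤ tent a u + |t - u| / a := by
  have hsub : (|u| - |t|) / a ≤ |t - u| / a := by
    gcongr
    simpa [abs_sub_comm] using abs_sub_abs_le_abs_sub u t
  refine max_le (add_nonneg (tent_nonneg a u) (div_nonneg (abs_nonneg _) ha)) ?_
  calc 1 - |t| / a = (1 - |u| / a) + (|u| - |t|) / a := by ring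
    _ ≤ tent a u + |t - u| / a := add_le_add (le_max_right _ _) hsub

lemma continuous_tent (a : ℝ) : Continuous (tent a) := by
  unfold tent
  fun_prop

def flowSup {Z : Type*} (Φ : ℝ → Z → Z) (φ : Z → ℝ) (a : ℝ) (z : Z) : ℝ :=
  sSup ((fun t => tent a t * φ (Φ t z)) '' Icc (-a) a)

section flowSup

variable {Z : Type*} {Φ : ℝ → Z → Z} {φ : Z → ℝ} {a : ℝ}

lemma tent_mul_mem_Icc (ha : 0 ≤ a) (hφ : ∀ z, φ z ∈ Icc (0 : ℝ) 1) (t : ℝ) (z : Z) :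
    tent a t * φ z ∈ Icc (0 : ℝ) 1 :=
  ⟨mul_nonneg (tent_nonneg a t) (hφ z).1,
    mul_le_one₀ (tent_le_one ha t) (hφ z).1 (hφ z).2⟩

lemma bddAbove_flowSup_image (ha : 0 ≤ a) (hφ : ∀ z, φ z ∈ Icc (0 : ℝ) 1) (z : Z) :
    BddAbove ((fun t => tent a t * φ (Φ t z)) '' Icc (-a) a) :=
  ⟨1, by rintro _ ⟨t, -, rfl⟩; exact (tent_mul_mem_Icc ha hφ t _).2⟩

lemma le_flowSup_of_mem_Icc (ha : 0 ≤ a) (hφ : ∀ z, φ z ∈ Icc (0 : ℝ) 1) {t : ℝ}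
    (ht : t ∈ Icc (-a) a) (z : Z) : tent a t * φ (Φ t z) ≤ flowSup Φ φ a z :=
  le_csSup (bddAbove_flowSup_image ha hφ z) (mem_image_of_mem _ ht)

lemma flowSup_mem_Icc (ha : 0 ≤ a) (hφ : ∀ z, φ z ∈ Icc (0 : ℝ) 1) (z : Z) :
    flowSup Φ φ a z ∈ Icc (0 : ℝ) 1 := by
  have h0 : (0 : ℝ) ∈ Icc (-a) a := ⟨by linarith, ha⟩
  refine ⟨(tent_mul_mem_Icc ha hφ 0 _).1.trans (le_flowSup_of_mem_Icc ha hφ h0 z), ?_⟩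
  refine csSup_le ((nonempty_of_mem h0).image _) ?_
  rintro _ ⟨t, -, rfl⟩
  exact (tent_mul_mem_Icc ha hφ t _).2

lemma le_flowSup (ha : 0 < a) (hφ : ∀ z, φ z ∈ Icc (0 : ℝ) 1) (t : ℝ) (z : Z) :
    tent a t * φ (Φ t z) ≤ flowSup Φ φ a z := by
  by_cases ht : t ∈ Icc (-a) a
  · exact le_flowSup_of_mem_Icc ha.le hφ ht z
  · rw [tent_eq_zero_of_notMem_Icc ha ht, zero_mul]
    exact (flowSup_mem_Icc ha.le hφ z).1

lemma flowSup_eq_one (ha : 0 ≤ a) (hφ : ∀ z, φ z ∈ Icc (0 : ℝ) 1) (hΦ0 : ∀ z, Φ 0 z = z)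
    {z : Z} (hz : φ z = 1) : flowSup Φ φ a z = 1 := by
  refine le_antisymm (flowSup_mem_Icc ha hφ z).2 ?_
  simpa [tent_zero, hΦ0, hz] using le_flowSup_of_mem_Icc (Φ := Φ) ha hφ ⟨by linarith, ha⟩ z

lemma flowSup_eq_zero (ha : 0 ≤ a) (hφ : ∀ z, φ z ∈ Icc (0 : ℝ) 1) {z : Z}
    (hz : ∀ t ∈ Icc (-a) a, φ (Φ t z) = 0) : flowSup Φ φ a z = 0 := by
  refine le_antisymm ?_ (flowSup_mem_Icc ha hφ z).1
  refine csSup_le ((nonempty_Icc.mpr (by linarith)).image _) ?_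
  rintro _ ⟨t, ht, rfl⟩
  simp [hz t ht]

lemma flowSup_flow_le (ha : 0 < a) (hφ : ∀ z, φ z ∈ Icc (0 : ℝ) 1)
    (hΦadd : ∀ s t z, Φ (s + t) z = Φ s (Φ t z)) (s : ℝ) (z : Z) :
    flowSup Φ φ a (Φ s z) ≤ flowSup Φ φ a z + |s| / a := by
  refine csSup_le ((nonempty_Icc.mpr (by linarith)).image _) ?_
  rintro _ ⟨t, -, rfl⟩
  have hφts := hφ (Φ (t + s) z)
  calc tent a t * φ (Φ t (Φ s z))
      ≤ (tent a (t + s) + |s| / a) * φ (Φ (t + s) z) := by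
        rw [← hΦadd]
        gcongr
        · exact hφts.1
        · simpa using tent_le_tent_add ha.le t (t + s)
    _ ≤ tent a (t + s) * φ (Φ (t + s) z) + |s| / a := by
        nlinarith [mul_nonneg (div_nonneg (abs_nonneg s) ha.le) (sub_nonneg.mpr hφts.2)]
    _ ≤ flowSup Φ φ a z + |s| / a := by gcongr; exact le_flowSup ha hφ _ z

lemma abs_flowSup_flow_sub_le (ha : 0 < a) (hφ : ∀ z, φ z ∈ Icc (0 : ℝ) 1)
    (hΦ0 : ∀ z, Φ 0 z = z) (hΦadd : ∀ s t z, Φ (s + t) z = Φ s (Φ t z)) (s : ℝ) (z : Z) :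
    |flowSup Φ φ a (Φ s z) - flowSup Φ φ a z| ≤ |s| / a := by
  have hback := flowSup_flow_le ha hφ hΦadd (-s) (Φ s z)
  rw [← hΦadd, neg_add_cancel, hΦ0, abs_neg] at hback
  rw [abs_sub_le_iff]
  constructor <;> linarith [flowSup_flow_le ha hφ hΦadd s z]

lemma continuous_flowSup [TopologicalSpace Z] (hΦ : Continuous fun p : ℝ × Z => Φ p.1 p.2)
    (hφ : Continuous φ) : Continuous (flowSup Φ φ a) :=
  isCompact_Icc.continuous_sSup (f := fun z t => tent a t * φ (Φ t z))
    (((continuous_tent a).comp continuous_snd).mul (hφ.comp (hΦ.comp continuous_swap)))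

end flowSup

end

theorem slow_bump_function_general {Z : Type*} [MetricSpace Z]
    (Φ : ℝ → Z → Z) (hΦcont : Continuous fun p : ℝ × Z => Φ p.1 p.2)
    (hΦ0 : ∀ z, Φ 0 z = z) (hΦadd : ∀ s t z, Φ (s + t) z = Φ s (Φ t z))
    (a : ℝ) (ha : 0 < a) (K : Set Z) (hK : IsCompact K)
    (U : Set Z) (hU : IsOpen U) (hKU : K ⊆ U) :
    ∃ f : Z → ℝ, Continuous f ∧ (∀ z, f z ∈ Set.Icc (0 : ℝ) 1) ∧
      (∀ z ∈ K, f z = 1) ∧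
      (∀ z, z ∉ {y : Z | ∃ t ∈ Set.Icc (-a) a, ∃ u ∈ U, y = Φ t u} → f z = 0) ∧
      (∀ (s : ℝ) (z : Z), |f (Φ s z) - f z| ≤ |s| / a) := by
  obtain ⟨φ, hφU, hφK, hφ⟩ := exists_continuous_zero_one_of_isClosed hU.isClosed_compl
    hK.isClosed (disjoint_compl_left_iff_subset.mpr hKU)
  refine ⟨flowSup Φ φ a, continuous_flowSup hΦcont φ.continuous, flowSup_mem_Icc ha.le hφ,
    fun z hz => flowSup_eq_one ha.le hφ hΦ0 (hφK hz), fun z hz => ?_,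
    abs_flowSup_flow_sub_le ha hφ hΦ0 hΦadd⟩
  refine flowSup_eq_zero ha.le hφ fun t ht => hφU fun htU => hz ?_
  refine ⟨-t, ⟨neg_le_neg ht.2, by linarith [ht.1]⟩, Φ t z, htU, ?_⟩
  rw [← hΦadd, neg_add_cancel, hΦ0]

/-- Slow bump functions for a flow on a compact metric space. -/
theorem slow_bump_function {Z : Type*} [MetricSpace Z] [CompactSpace Z]
    (Φ : ℝ → Z → Z) (hΦcont : Continuous fun p : ℝ × Z => Φ p.1 p.2)
    (hΦ0 : ∀ z, Φ 0 z = z) (hΦadd : ∀ s t z, Φ (s + t) z = Φ s (Φ t z))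
    (a : ℝ) (ha : 0 < a) (K : Set Z) (hK : IsCompact K)
    (U : Set Z) (hU : IsOpen U) (hKU : K ⊆ U) :
    ∃ f : Z → ℝ, Continuous f ∧ (∀ z, f z ∈ Set.Icc (0 : ℝ) 1) ∧
      (∀ z ∈ K, f z = 1) ∧
      (∀ z, z ∉ {y : Z | ∃ t ∈ Set.Icc (-a) a, ∃ u ∈ U, y = Φ t u} → f z = 0) ∧
      (∀ (s : ℝ) (z : Z), |f (Φ s z) - f z| ≤ |s| / a) :=
  slow_bump_function_general Φ hΦcont hΦ0 hΦadd a ha K hK U hU hKU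
end

section
/- Given continuous functions f_U : Z → [0,1] indexed by a finite set 𝒰 such that (a) for every z there is U with f_U(z) = 1, (b) for every z at most N+1 of the values f_U(z) are nonzero, and (c) |f_U(z) − f_U(z')| ≤ η for all U whenever z' = Φ_τ(z) with |τ| ≤ α, then the normalized functions t_U(z) = f_U(z) / Σ_{U'} f_{U'}(z) satisfy |t_U(z) − t_U(Φ_τ(z))| ≤ (2N+3)·η for all U ∈ 𝒰, z ∈ Z and |τ| ≤ α. -/
/-!
Write `S(z) = ∑ f_U(z) ≥ 1`. Moving along the flow, `t_U` changes by at most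
`|f_U(z') - f_U(z)| + |S(z') - S(z)|`, and `S` changes by at most `(2N+2)η`, because only
the at most `2N+2` indices that are nonzero at `z` or at `z'` contribute to `S(z') - S(z)`.
-/

open Finset

lemma abs_sum_sub_sum_le_card_support_mul {ι : Type*} [Fintype ι] [DecidableEq ι]
    (g h : ι → ℝ) {η : ℝ} (hη : 0 ≤ η) (hgh : ∀ j, |g j - h j| ≤ η) :
    |∑ j, g j - ∑ j, h j| ≤ (#{j | g j ≠ 0} + #{j | h j ≠ 0} : ℕ) * η := by
  set T : Finset ι := univ.filter (g · ≠ 0) ∪ univ.filter (h · ≠ 0)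
  have hT : ∑ j, (g j - h j) = ∑ j ∈ T, (g j - h j) := by
    refine (sum_subset (subset_univ T) fun j _ hj => ?_).symm
    simp only [T, mem_union, mem_filter, mem_univ, true_and, not_or, not_not] at hj
    rw [hj.1, hj.2, sub_zero]
  calc |∑ j, g j - ∑ j, h j| = |∑ j ∈ T, (g j - h j)| := by rw [← sum_sub_distrib, hT]
    _ ≤ ∑ j ∈ T, |g j - h j| := abs_sum_le_sum_abs _ _
    _ ≤ #T * η := by simpa using sum_le_card_nsmul T _ η fun j _ => hgh j
    _ ≤ _ := by gcongr; exact card_union_le _ _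

lemma abs_div_sub_div_le_of_one_le {a a' S S' : ℝ} (ha : 0 ≤ a) (haS : a ≤ S)
    (hS : 0 < S) (hS' : 1 ≤ S') :
    |a' / S' - a / S| ≤ |a' - a| + |S' - S| := by
  have hS'pos : 0 < S' := one_pos.trans_le hS'
  have hdecomp : a' / S' - a / S = ((a' - a) + a / S * (S - S')) / S' := by
    field_simp
    ring
  have hratio : |a / S| ≤ 1 := by
    rw [abs_of_nonneg (div_nonneg ha hS.le)]
    exact div_le_one_of_le₀ haS hS.le
  calc |a' / S' - a / S| ≤ |(a' - a) + a / S * (S - S')| := by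
        rw [hdecomp, abs_div, abs_of_pos hS'pos]
        exact div_le_self (abs_nonneg _) hS'
    _ ≤ |a' - a| + |a / S| * |S' - S| := by
        rw [abs_sub_comm S' S, ← abs_mul]
        exact abs_add_le _ _
    _ ≤ |a' - a| + |S' - S| := by
        gcongr
        exact mul_le_of_le_one_left (abs_nonneg _) hratio

theorem normalized_partition_estimate_general {Z : Type*} {ι : Type*} [Fintype ι]
    (Φ : ℝ → Z → Z) (N : ℕ) (α η : ℝ)
    (f : ι → Z → ℝ)
    (hrange : ∀ i z, f i z ∈ Set.Icc (0 : ℝ) 1)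
    (hone : ∀ z, ∃ i, f i z = 1)
    (hcard : ∀ z, {i : ι | f i z ≠ 0}.ncard ≤ N + 1)
    (hslow : ∀ (i : ι) (z : Z) (τ : ℝ), |τ| ≤ α → |f i (Φ τ z) - f i z| ≤ η) :
    ∀ (i : ι) (z : Z) (τ : ℝ), |τ| ≤ α →
      |f i (Φ τ z) / (∑ j, f j (Φ τ z)) - f i z / (∑ j, f j z)| ≤ (2 * (N : ℝ) + 3) * η := by
  classical
  intro i z τ hτ
  have hη : 0 ≤ η := (abs_nonneg _).trans (hslow i z τ hτ)
  have one_le_sum (w : Z) : 1 ≤ ∑ j, f j w := by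
    obtain ⟨k, hk⟩ := hone w
    exact hk ▸ single_le_sum (fun j _ => (hrange j w).1) (mem_univ k)
  have card_support (w : Z) : #{j | f j w ≠ 0} ≤ N + 1 := by
    simpa [Set.ncard_eq_toFinset_card'] using hcard w
  have hsum : |∑ j, f j (Φ τ z) - ∑ j, f j z| ≤ (2 * (N : ℝ) + 2) * η := by
    refine (abs_sum_sub_sum_le_card_support_mul _ _ hη fun j => hslow j z τ hτ).trans ?_
    gcongr
    exact_mod_cast (add_le_add (card_support (Φ τ z)) (card_support z)).trans_eq (by ring)
  calc _ ≤ |f i (Φ τ z) - f i z| + |∑ j, f j (Φ τ z) - ∑ j, f j z| :=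
        abs_div_sub_div_le_of_one_le (hrange i z).1
          ((hrange i z).2.trans (one_le_sum z)) (one_pos.trans_le (one_le_sum z))
          (one_le_sum _)
    _ ≤ η + (2 * (N : ℝ) + 2) * η := add_le_add (hslow i z τ hτ) hsum
    _ = (2 * (N : ℝ) + 3) * η := by ring

/-- Normalizing slow bump functions yields a partition of unity whose members vary
slowly along the flow. -/
theorem normalized_partition_estimate {Z : Type*} {ι : Type*} [Fintype ι]
    (Φ : ℝ → Z → Z) (N : ℕ) (α η : ℝ) (hα : 0 < α) (hη : 0 < η)
    (f : ι → Z → ℝ)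
    (hrange : ∀ i z, f i z ∈ Set.Icc (0 : ℝ) 1)
    (hone : ∀ z, ∃ i, f i z = 1)
    (hcard : ∀ z, {i : ι | f i z ≠ 0}.ncard ≤ N + 1)
    (hslow : ∀ (i : ι) (z : Z) (τ : ℝ), |τ| ≤ α → |f i (Φ τ z) - f i z| ≤ η) :
    ∀ (i : ι) (z : Z) (τ : ℝ), |τ| ≤ α →
      |f i (Φ τ z) / (∑ j, f j (Φ τ z)) - f i z / (∑ j, f j z)| ≤ (2 * (N : ℝ) + 3) * η :=
  normalized_partition_estimate_general Φ N α η f hrange hone hcard hslow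
end

section
/- Let G be a topological group acting continuously, properly, and by isometries on a metric space X, and suppose the action is smooth (all isotropy groups G_x are open). Then for every x ∈ X there is ε > 0 such that G_x = {g ∈ G : g·B_ε(x) ∩ B_ε(x) ≠ ∅}; in particular G_y ⊆ G_x for every y ∈ B_ε(x). -/
/-!
The map `(g, y) ↦ (y, g • y)` is proper, hence closed, so it sends the closed set of pairs
`(g, y)` with `g ∉ G_x` (closed because `G_x` is open) to a closed set avoiding `(x, x)`.
A ball `B` around `x` with `B ×ˢ B` inside the complement of that image does the job.
-/

def PropMap {X Y : Type*} [TopologicalSpace X] [TopologicalSpace Y] (f : X → Y) : Prop :=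
  Continuous f ∧ ∀ K : Set Y, IsCompact K → IsCompact (f ⁻¹' K)

open Filter Topology MulAction

theorem PropMap.isProperMap {X Y : Type*} [TopologicalSpace X] [TopologicalSpace Y]
    [T2Space Y] [CompactlyCoherentSpace Y] {f : X → Y} (hf : PropMap f) : IsProperMap f :=
  isProperMap_iff_isCompact_preimage.2 ⟨hf.1, fun K hK ↦ hf.2 K hK⟩

theorem exists_mem_nhds_smul_mem_imp_mem_stabilizer {G X : Type*} [Group G]
    [TopologicalSpace G] [TopologicalSpace X] [MulAction G X]
    (hclosed : IsClosedMap fun p : G × X => (p.2, p.1 • p.2)) {x : X}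
    (hx : IsOpen (stabilizer G x : Set G)) :
    ∃ U ∈ 𝓝 x, ∀ g : G, ∀ y ∈ U, g • y ∈ U → g ∈ stabilizer G x := by
  set f := fun p : G × X => (p.2, p.1 • p.2)
  set C : Set (G × X) := (stabilizer G x : Set G)ᶜ ×ˢ Set.univ
  have hfC : IsClosed (f '' C) := hclosed C (hx.isClosed_compl.prod isClosed_univ)
  have hxx : (x, x) ∉ f '' C := by
    rintro ⟨⟨g, y⟩, ⟨hg, -⟩, hfp⟩
    simp only [f, Prod.mk.injEq] at hfp
    obtain ⟨rfl, hgy⟩ := hfp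
    exact hg hgy
  have hnhds : (f '' C)ᶜ ∈ 𝓝 x ×ˢ 𝓝 x := by
    rw [← nhds_prod_eq]
    exact hfC.isOpen_compl.mem_nhds hxx
  obtain ⟨U, hU, hUU⟩ := mem_prod_self_iff.1 hnhds
  refine ⟨U, hU, fun g y hy hgy ↦ ?_⟩
  by_contra hg
  exact hUU ⟨hy, hgy⟩ ⟨(g, y), ⟨hg, trivial⟩, rfl⟩

theorem stabilizer_of_small_ball_general {G X : Type*} [Group G] [TopologicalSpace G]
    [MetricSpace X] [MulAction G X]
    (hproper : PropMap fun p : G × X => (p.2, p.1 • p.2))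
    (hsmooth : ∀ x : X, IsOpen ((MulAction.stabilizer G x : Set G))) :
    ∀ x : X, ∃ ε > 0,
      (∀ g : G, g ∈ MulAction.stabilizer G x ↔
        ∃ y ∈ Metric.ball x ε, g • y ∈ Metric.ball x ε) ∧
      (∀ y ∈ Metric.ball x ε, MulAction.stabilizer G y ≤ MulAction.stabilizer G x) := by
  intro x
  obtain ⟨U, hU, hstab⟩ := exists_mem_nhds_smul_mem_imp_mem_stabilizer
    hproper.isProperMap.isClosedMap (hsmooth x)
  obtain ⟨ε, hε, hball⟩ := Metric.mem_nhds_iff.1 hU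
  have hsmall : ∀ g : G, ∀ y ∈ Metric.ball x ε, g • y ∈ Metric.ball x ε →
      g ∈ stabilizer G x :=
    fun g y hy hgy ↦ hstab g y (hball hy) (hball hgy)
  refine ⟨ε, hε, fun g ↦ ⟨fun hg ↦ ?_, fun ⟨y, hy, hgy⟩ ↦ hsmall g y hy hgy⟩,
    fun y hy g hg ↦ ?_⟩
  · have hx : x ∈ Metric.ball x ε := Metric.mem_ball_self hε
    exact ⟨x, hx, (mem_stabilizer_iff.1 hg).symm ▸ hx⟩
  · exact hsmall g y hy ((mem_stabilizer_iff.1 hg).symm ▸ hy)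

/-- For a proper, smooth, isometric action, the stabilizer of `x` consists exactly of
the elements moving some point of a small ball back into that ball; in particular
stabilizers only decrease on a small ball. -/
theorem stabilizer_of_small_ball {G X : Type*} [Group G] [TopologicalSpace G]
    [IsTopologicalGroup G] [LocallyCompactSpace G] [T2Space G]
    [MetricSpace X] [MulAction G X]
    (hcont : Continuous fun p : G × X => p.1 • p.2)
    (hiso : ∀ g : G, Isometry (fun x : X => g • x))
    (hproper : PropMap fun p : G × X => (p.2, p.1 • p.2))
    (hsmooth : ∀ x : X, IsOpen ((MulAction.stabilizer G x : Set G))) :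
    ∀ x : X, ∃ ε > 0,
      (∀ g : G, g ∈ MulAction.stabilizer G x ↔
        ∃ y ∈ Metric.ball x ε, g • y ∈ Metric.ball x ε) ∧
      (∀ y ∈ Metric.ball x ε, MulAction.stabilizer G y ≤ MulAction.stabilizer G x) :=
  stabilizer_of_small_ball_general hproper hsmooth
end

section
/- Let X be a locally compact metric space with an isometric action of a locally compact Hausdorff group G. Then the action is proper and smooth if and only if every orbit Gx is a discrete subspace of X and every isotropy group G_x is compact. -/
/-!
An isometric action is homogeneous, so the orbit of `x` is discrete iff `x` is isolated in it:
`g • x = x` whenever `dist (g • x) x < ε`. Then the elements moving `x` into a ball of radius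
`ε / 2` lie in a single coset of the stabilizer `G_x`. So if stabilizers are compact and
`(g • y, y) → (x₁, x₂)` along an ultrafilter on `G × X`, then also `g • x₂ → x₁` by isometry,
hence `g` eventually lies in a compact coset `g₀ • G_x₂` and converges: the action is proper.
Conversely a proper action has compact stabilizers, and if `G_x` is open, an ultrafilter of
elements moving `x` close to but off `x` would converge into `G_x`, which is absurd.
-/

open Filter Topology MulAction
open scoped Pointwise

section

variable {G X : Type*} [Group G] [MulAction G X]

section Isometric

variable [PseudoMetricSpace X] [IsIsometricSMul G X]

theorem discreteTopology_orbit_iff (x : X) :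
    DiscreteTopology (orbit G x) ↔ ∃ ε > 0, ∀ g : G, dist (g • x) x < ε → g • x = x := by
  have : ContinuousConstSMul G (orbit G x) :=
    ⟨fun g => ((isometry_smul X g).continuous.comp continuous_subtype_val).subtype_mk _⟩
  rw [IsPretransitive.discreteTopology_iff G ⟨x, mem_orbit_self x⟩, Metric.isOpen_singleton_iff]
  simp only [Subtype.forall, Subtype.ext_iff, Subtype.dist_eq, mem_orbit_iff, forall_exists_index,
    forall_apply_eq_imp_iff]

theorem mem_smul_stabilizer_of_dist_smul_lt {ε : ℝ} {x : X}
    (hε : ∀ g : G, dist (g • x) x < ε → g • x = x) {g h : G} (hgh : dist (g • x) (h • x) < ε) :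
    g ∈ h • (stabilizer G x : Set G) := by
  rw [Set.mem_smul_set_iff_inv_smul_mem, smul_eq_mul, SetLike.mem_coe, mem_stabilizer_iff]
  apply hε
  rwa [mul_smul, ← dist_smul h, smul_inv_smul]

end Isometric

variable [TopologicalSpace G]

theorem propMap_iff_properSMul [TopologicalSpace X] [T2Space X]
    [CompactlyCoherentSpace (X × X)] :
    PropMap (fun p : G × X => (p.2, p.1 • p.2)) ↔ ProperSMul G X := by
  rw [properSMul_iff, PropMap, ← isProperMap_iff_isCompact_preimage]
  exact ⟨(Homeomorph.prodComm X X).isProperMap.comp, (Homeomorph.prodComm X X).isProperMap.comp⟩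

theorem ProperSMul.isCompact_stabilizer [TopologicalSpace X] [ProperSMul G X] (x : X) :
    IsCompact (stabilizer G x : Set G) := by
  convert ProperSMul.isCompact_setOfPred_inter_nonempty (G := G) (isCompact_singleton (x := x))
    (isCompact_singleton (x := x)) using 1
  ext g
  simp [eq_comm]

theorem isOpen_stabilizer_of_discreteTopology_orbit [TopologicalSpace X] [ContinuousSMul G X]
    (x : X) [DiscreteTopology (orbit G x)] : IsOpen (stabilizer G x : Set G) := by
  have horbitMap : Continuous fun g : G => (⟨g • x, mem_orbit x g⟩ : orbit G x) :=
    (continuous_id.smul continuous_const).subtype_mk _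
  convert (isOpen_discrete {(⟨x, mem_orbit_self x⟩ : orbit G x)}).preimage horbitMap using 1
  ext g
  simp [Subtype.ext_iff]

theorem ProperSMul.discreteTopology_orbit [PseudoMetricSpace X] [IsIsometricSMul G X]
    [ProperSMul G X] {x : X} (hx : IsOpen (stabilizer G x : Set G)) :
    DiscreteTopology (orbit G x) := by
  rw [discreteTopology_orbit_iff]
  by_contra! hne
  let F := comap (· • x) (𝓝 x) ⊓ 𝓟 {g : G | g • x ≠ x}
  have : F.NeBot :=
    (Metric.nhds_basis_ball.comap _).inf_principal_neBot_iff.mpr fun {ε} hε => hne ε hε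
  let 𝒰 := Ultrafilter.of F
  have h𝒰F : (𝒰 : Filter G) ≤ F := Ultrafilter.of_le F
  have hlim : Tendsto (fun g : G => (g • x, x)) 𝒰 (𝓝 (x, x)) :=
    (tendsto_comap.mono_left (h𝒰F.trans inf_le_left)).prodMk_nhds tendsto_const_nhds
  obtain ⟨h, hhx, hh⟩ := (properSMul_iff_continuousSMul_ultrafilter_tendsto.mp ‹_›).2
    (𝒰.map fun g => (g, x)) x x hlim
  have hstab : (stabilizer G x : Set G) ∈ 𝒰 := hh (hx.mem_nhds hhx)
  have hmove : {g : G | g • x ≠ x} ∈ 𝒰 := h𝒰F (mem_inf_of_right (mem_principal_self _))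
  obtain ⟨g, hg, hgx⟩ := 𝒰.nonempty_of_mem (inter_mem hstab hmove)
  exact hgx hg

theorem properSMul_of_discreteTopology_orbit_of_isCompact_stabilizer [MetricSpace X]
    [IsIsometricSMul G X] [ContinuousMul G] [ContinuousSMul G X]
    (hd : ∀ x : X, DiscreteTopology (orbit G x))
    (hc : ∀ x : X, IsCompact (stabilizer G x : Set G)) : ProperSMul G X := by
  refine properSMul_iff_continuousSMul_ultrafilter_tendsto_t2.mpr ⟨‹_›, fun 𝒰 x₁ x₂ hlim => ?_⟩
  obtain ⟨ε, hε, hisol⟩ := (discreteTopology_orbit_iff x₂).mp (hd x₂)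
  have hmoved : Tendsto (fun p : G × X => p.1 • p.2) 𝒰 (𝓝 x₁) :=
    (continuous_fst.tendsto _).comp hlim
  have hbase : Tendsto (fun p : G × X => p.2) 𝒰 (𝓝 x₂) := (continuous_snd.tendsto _).comp hlim
  have horbit : Tendsto (fun p : G × X => p.1 • x₂) 𝒰 (𝓝 x₁) := by
    refine tendsto_of_tendsto_of_dist hmoved ?_
    simpa only [dist_smul] using tendsto_iff_dist_tendsto_zero.mp hbase
  have hnear : ∀ᶠ p : G × X in 𝒰, dist (p.1 • x₂) x₁ < ε / 2 :=
    horbit.eventually (Metric.ball_mem_nhds x₁ (half_pos hε))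
  obtain ⟨q, hq⟩ := hnear.exists
  have hcoset : ∀ᶠ p : G × X in 𝒰, p.1 ∈ q.1 • (stabilizer G x₂ : Set G) :=
    hnear.mono fun p hp => mem_smul_stabilizer_of_dist_smul_lt hisol <|
      (dist_triangle_right _ _ x₁).trans_lt (add_halves ε ▸ add_lt_add hp hq)
  obtain ⟨g, -, hg⟩ :=
    ((hc x₂).smul q.1).ultrafilter_le_nhds (𝒰.map Prod.fst) (le_principal_iff.mpr hcoset)
  exact ⟨g, hg⟩

end

theorem proper_smooth_iff_discrete_orbits_compact_stabilizers_general {G X : Type*} [Group G]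
    [TopologicalSpace G] [IsTopologicalGroup G]
    [MetricSpace X] [MulAction G X]
    (hcont : Continuous fun p : G × X => p.1 • p.2)
    (hiso : ∀ g : G, Isometry (fun x : X => g • x)) :
    ((PropMap fun p : G × X => (p.2, p.1 • p.2)) ∧
      (∀ x : X, IsOpen ((MulAction.stabilizer G x : Set G)))) ↔
    (∀ x : X, DiscreteTopology (MulAction.orbit G x) ∧
      IsCompact ((MulAction.stabilizer G x : Set G))) := by
  have : ContinuousSMul G X := ⟨hcont⟩
  have : IsIsometricSMul G X := ⟨hiso⟩
  rw [propMap_iff_properSMul]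
  refine ⟨fun ⟨_, hopen⟩ x =>
    ⟨ProperSMul.discreteTopology_orbit (hopen x), ProperSMul.isCompact_stabilizer x⟩, fun h => ?_⟩
  refine ⟨properSMul_of_discreteTopology_orbit_of_isCompact_stabilizer
    (fun x => (h x).1) (fun x => (h x).2), fun x => ?_⟩
  have := (h x).1
  exact isOpen_stabilizer_of_discreteTopology_orbit x

/-- For an isometric action of a locally compact group on a locally compact metric
space: the action is proper and smooth iff all orbits are discrete and all isotropy
groups are compact. -/
theorem proper_smooth_iff_discrete_orbits_compact_stabilizers {G X : Type*} [Group G]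
    [TopologicalSpace G] [IsTopologicalGroup G] [LocallyCompactSpace G] [T2Space G]
    [MetricSpace X] [LocallyCompactSpace X] [MulAction G X]
    (hcont : Continuous fun p : G × X => p.1 • p.2)
    (hiso : ∀ g : G, Isometry (fun x : X => g • x)) :
    ((PropMap fun p : G × X => (p.2, p.1 • p.2)) ∧
      (∀ x : X, IsOpen ((MulAction.stabilizer G x : Set G)))) ↔
    (∀ x : X, DiscreteTopology (MulAction.orbit G x) ∧
      IsCompact ((MulAction.stabilizer G x : Set G))) :=
  proper_smooth_iff_discrete_orbits_compact_stabilizers_general hcont hiso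
end

section
/- Let X be a complete CAT(0) space with base point b, let c_{b,x} denote the generalized geodesic from b to x (constant equal to b on (−∞,0], equal to the geodesic from b to x on [0, d(b,x)], constant equal to x afterwards). For every δ > 0 choose Δ > 0 with ∫_Δ^∞ s/(2e^s) ds < δ. Then for all R', T with R' ≥ T + Δ and all x ∈ X, d_FS(Φ_T(c_{b,x}), Φ_T(c_{b,π_{R'}(x)})) < δ, where π_{R'} is the radial projection of X onto the closed ball of radius R' around b. -/
/-!
Up to time `R'` the generalized geodesics from `b` to `x` and to `π_{R'}(x)` coincide: in a
CAT(0) space a point at distances `s` and `r` from the endpoints of a segment of length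
`s + r` is unique, by the CN inequality at the midpoint of two candidates. After time `R'`
they drift apart at unit speed at most, so once flowed by `T ≤ R' - Δ` their pointwise
distance at time `t` is `0` for `t ≤ Δ` and at most `t` beyond, and the `d_FS` integrand is
dominated by `t / (2 e^t)` on `(Δ, ∞)`.
-/

open MeasureTheory

/-- The flow on the space of generalized geodesics. -/
def flowFS {Z : Type*} [MetricSpace Z] (c : ℝ → Z) (τ : ℝ) : ℝ → Z := fun t => c (t + τ)

/-- A CAT(0) space: a geodesic metric space satisfying the CN (Bruhat–Tits)
inequality for midpoints. -/
def IsCAT0 (X : Type*) [MetricSpace X] : Prop :=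
  (∀ x y : X, ∃ γ : ℝ → X, γ 0 = x ∧ γ (dist x y) = y ∧
    ∀ s ∈ Set.Icc 0 (dist x y), ∀ t ∈ Set.Icc 0 (dist x y),
      dist (γ s) (γ t) = |s - t|) ∧
  (∀ x y z m : X, dist y m = dist y z / 2 → dist m z = dist y z / 2 →
    dist x m ^ 2 ≤ (dist x y ^ 2 + dist x z ^ 2) / 2 - dist y z ^ 2 / 4)

open Set

section

variable {X : Type*} [MetricSpace X]

lemma IsCAT0.exists_midpoint (hX : IsCAT0 X) (p q : X) :
    ∃ m, dist p m = dist p q / 2 ∧ dist m q = dist p q / 2 := by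
  obtain ⟨γ, hγp, hγq, hγ⟩ := hX.1 p q
  have hpq : 0 ≤ dist p q := dist_nonneg
  have hpm := hγ 0 ⟨le_rfl, hpq⟩ (dist p q / 2) ⟨by linarith, by linarith⟩
  have hmq := hγ (dist p q / 2) ⟨by linarith, by linarith⟩ (dist p q) ⟨hpq, le_rfl⟩
  rw [hγp] at hpm
  rw [hγq] at hmq
  refine ⟨γ (dist p q / 2), hpm.trans ?_, hmq.trans ?_⟩ <;>
    · rw [abs_of_nonpos (by linarith)]; ring

lemma IsCAT0.eq_of_dist_eq_of_dist_add_dist_eq (hX : IsCAT0 X) {b y p q : X}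
    (hb : dist b p = dist b q) (hy : dist p y = dist q y)
    (hbetween : dist b p + dist p y = dist b y) : p = q := by
  obtain ⟨m, hpm, hmq⟩ := hX.exists_midpoint p q
  have hCNb := hX.2 b p q m hpm hmq
  have hCNy := hX.2 y p q m hpm hmq
  rw [← hb] at hCNb
  rw [dist_comm y p, dist_comm y q, ← hy] at hCNy
  by_contra hpq
  have he : 0 < dist p q := dist_pos.2 hpq
  have hbm : dist b m < dist b p :=
    lt_of_pow_lt_pow_left₀ 2 dist_nonneg (by nlinarith)
  have hmy : dist y m < dist p y :=
    lt_of_pow_lt_pow_left₀ 2 dist_nonneg (by nlinarith)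
  linarith [dist_triangle b m y, dist_comm m y]

def IsGeneralizedGeodesic (b x : X) (γ : ℝ → X) : Prop :=
  (∀ t ≤ (0 : ℝ), γ t = b) ∧ (∀ t ≥ dist b x, γ t = x) ∧
    ∀ s ∈ Icc 0 (dist b x), ∀ t ∈ Icc 0 (dist b x), dist (γ s) (γ t) = |s - t|

namespace IsGeneralizedGeodesic

variable {b x : X} {γ γ' : ℝ → X}

lemma apply_eq_apply_max_min (hγ : IsGeneralizedGeodesic b x γ) (t : ℝ) :
    γ t = γ (max 0 (min t (dist b x))) := by
  have hd : 0 ≤ dist b x := dist_nonneg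
  rcases le_or_gt t 0 with ht | ht
  · rw [hγ.1 t ht, max_eq_left (min_le_of_left_le ht), hγ.1 0 le_rfl]
  rcases le_or_gt t (dist b x) with htd | htd
  · rw [min_eq_left htd, max_eq_right ht.le]
  · rw [min_eq_right htd.le, max_eq_right hd, hγ.2.1 t htd.le, hγ.2.1 _ le_rfl]

lemma lipschitzWith (hγ : IsGeneralizedGeodesic b x γ) : LipschitzWith 1 γ := by
  refine LipschitzWith.of_dist_le_mul fun s t => ?_
  have hmem : ∀ u : ℝ, max 0 (min u (dist b x)) ∈ Icc 0 (dist b x) :=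
    fun u => ⟨le_max_left _ _, max_le dist_nonneg (min_le_right _ _)⟩
  rw [hγ.apply_eq_apply_max_min s, hγ.apply_eq_apply_max_min t,
    hγ.2.2 _ (hmem s) _ (hmem t), NNReal.coe_one, one_mul, Real.dist_eq]
  calc |max 0 (min s (dist b x)) - max 0 (min t (dist b x))|
      ≤ |min s (dist b x) - min t (dist b x)| := by
        rw [max_comm, max_comm 0]; exact abs_max_sub_max_le_abs _ _ _
    _ ≤ |s - t| := by simpa using abs_min_sub_min_le_max s (dist b x) t (dist b x)

lemma dist_apply_of_le (hγ : IsGeneralizedGeodesic b x γ) {s t : ℝ} (hs : 0 ≤ s)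
    (hst : s ≤ t) (ht : t ≤ dist b x) : dist (γ s) (γ t) = t - s := by
  rw [hγ.2.2 s ⟨hs, hst.trans ht⟩ t ⟨hs.trans hst, ht⟩, abs_sub_comm]
  exact abs_of_nonneg (by linarith)

lemma dist_apply (hγ : IsGeneralizedGeodesic b x γ) {t : ℝ} (ht : 0 ≤ t)
    (htd : t ≤ dist b x) : dist b (γ t) = t := by
  rw [← hγ.1 0 le_rfl, hγ.dist_apply_of_le le_rfl ht htd, sub_zero]

lemma apply_eq_of_le (hX : IsCAT0 X) (hγ : IsGeneralizedGeodesic b x γ) {m : ℝ}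
    (hm : m ∈ Icc 0 (dist b x)) (hγ' : IsGeneralizedGeodesic b (γ m) γ') {t : ℝ}
    (htm : t ≤ m) : γ' t = γ t := by
  rcases le_or_gt t 0 with ht | ht
  · rw [hγ.1 t ht, hγ'.1 t ht]
  have hbm : dist b (γ m) = m := hγ.dist_apply hm.1 hm.2
  have hγ'm : γ' m = γ m := hγ'.2.1 m hbm.le
  refine hX.eq_of_dist_eq_of_dist_add_dist_eq (b := b) (y := γ m) ?_ ?_ ?_
  · rw [hγ'.dist_apply ht.le (hbm.ge.trans' htm), hγ.dist_apply ht.le (htm.trans hm.2)]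
  · rw [← hγ'm, hγ'.dist_apply_of_le ht.le htm hbm.ge, hγ'm,
      hγ.dist_apply_of_le ht.le htm hm.2]
  · rw [hγ'.dist_apply ht.le (hbm.ge.trans' htm), ← hγ'm,
      hγ'.dist_apply_of_le ht.le htm hbm.ge, hγ'm, hbm]
    ring

lemma dist_apply_le (hX : IsCAT0 X) (hγ : IsGeneralizedGeodesic b x γ) {m : ℝ}
    (hm : m ∈ Icc 0 (dist b x)) (hγ' : IsGeneralizedGeodesic b (γ m) γ') (t : ℝ) :
    dist (γ t) (γ' t) ≤ max (t - m) 0 := by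
  rcases le_or_gt t m with htm | hmt
  · rw [hγ.apply_eq_of_le hX hm hγ' htm, dist_self]
    exact le_max_right _ _
  · rw [hγ'.2.1 t (by rw [hγ.dist_apply hm.1 hm.2]; exact hmt.le)]
    calc dist (γ t) (γ m) ≤ dist t m := by simpa using hγ.lipschitzWith.dist_le_mul t m
      _ = t - m := by rw [Real.dist_eq, abs_of_pos (by linarith)]
      _ ≤ max (t - m) 0 := le_max_left _ _

end IsGeneralizedGeodesic

/-- `c x (min R (dist b x))` is the radial projection of `x` to the closed ball of radius `R`
around `b` (equal to `b` when `R < 0`). -/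
lemma dist_apply_radialProjection_le (hX : IsCAT0 X) {b : X} {c : X → ℝ → X}
    (hc : ∀ x, IsGeneralizedGeodesic b x (c x)) (x : X) (R t : ℝ) :
    dist (c x t) (c (c x (min R (dist b x))) t) ≤ max (t - R) 0 := by
  have hd : 0 ≤ dist b x := dist_nonneg
  rcases le_total (dist b x) R with hdR | hRd
  · rw [min_eq_right hdR, (hc x).2.1 _ le_rfl, dist_self]
    exact le_max_right _ _
  rw [min_eq_left hRd]
  rcases le_total 0 R with hR | hR
  · exact (hc x).dist_apply_le hX ⟨hR, hRd⟩ (hc _) t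
  · rw [(hc x).1 R hR, ← (hc x).1 0 le_rfl]
    calc _ ≤ max (t - 0) 0 := (hc x).dist_apply_le hX ⟨le_rfl, hd⟩ (hc _) t
      _ ≤ max (t - R) 0 := max_le_max (by linarith) le_rfl

end

lemma integrableOn_div_two_mul_exp_Ioi {a : ℝ} (ha : 0 ≤ a) :
    IntegrableOn (fun s : ℝ => s / (2 * Real.exp s)) (Ioi a) := by
  have hΓ : IntegrableOn (fun s : ℝ => Real.exp (-s) * s ^ ((2 : ℝ) - 1)) (Ioi a) :=
    (Real.GammaIntegral_convergent two_pos).mono_set (Ioi_subset_Ioi ha)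
  refine IntegrableOn.congr_fun (hΓ.const_mul (1 / 2)) (fun s _ => ?_) measurableSet_Ioi
  rw [show (2 : ℝ) - 1 = 1 by norm_num, Real.rpow_one, Real.exp_neg]
  field_simp

lemma dFS_le_setIntegral_Ioi {Z : Type*} [MetricSpace Z] {c c' : ℝ → Z} {Δ : ℝ}
    (hΔ : 0 ≤ Δ) (hc : Continuous c) (hc' : Continuous c')
    (hcc' : ∀ t, dist (c t) (c' t) ≤ max (t - Δ) 0) :
    dFS c c' ≤ ∫ s in Ioi Δ, s / (2 * Real.exp s) := by
  set f : ℝ → ℝ := fun t => dist (c t) (c' t) / (2 * Real.exp |t|)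
  have hf_nonneg : ∀ t, 0 ≤ f t := fun t => by positivity
  have hf_le : ∀ t, f t ≤ max (t - Δ) 0 / (2 * Real.exp |t|) := fun t =>
    div_le_div_of_nonneg_right (hcc' t) (by positivity)
  have hf_zero : ∀ t ∉ Ioi Δ, f t = 0 := fun t ht => by
    have := hf_le t
    rw [max_eq_right (by simp at ht; linarith), zero_div] at this
    exact le_antisymm this (hf_nonneg t)
  have hf_le_Ioi : ∀ t ∈ Ioi Δ, f t ≤ t / (2 * Real.exp t) := fun t (ht : Δ < t) => by
    calc f t ≤ max (t - Δ) 0 / (2 * Real.exp |t|) := hf_le t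
      _ ≤ t / (2 * Real.exp t) := by
        rw [abs_of_pos (hΔ.trans_lt ht), max_eq_left (by linarith)]
        gcongr
        linarith
  have hf_cont : Continuous f :=
    (hc.dist hc').div (by fun_prop) fun t => by positivity
  have hf_int : IntegrableOn f (Ioi Δ) := by
    refine (integrableOn_div_two_mul_exp_Ioi hΔ).mono' hf_cont.aestronglyMeasurable
      ((ae_restrict_iff' measurableSet_Ioi).2 (ae_of_all _ fun t ht => ?_))
    rw [Real.norm_of_nonneg (hf_nonneg t)]
    exact hf_le_Ioi t ht
  calc dFS c c' = ∫ t in Ioi Δ, f t :=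
        (setIntegral_eq_integral_of_forall_compl_eq_zero hf_zero).symm
    _ ≤ _ := setIntegral_mono_on hf_int (integrableOn_div_two_mul_exp_Ioi hΔ)
        measurableSet_Ioi hf_le_Ioi

theorem radial_projection_estimate_general {X : Type*} [MetricSpace X]
    (hX : IsCAT0 X) (b : X)
    (c : X → ℝ → X)
    (hc : ∀ x : X, (∀ t ≤ (0 : ℝ), c x t = b) ∧ (∀ t ≥ dist b x, c x t = x) ∧
      ∀ s ∈ Set.Icc 0 (dist b x), ∀ t ∈ Set.Icc 0 (dist b x),
        dist (c x s) (c x t) = |s - t|)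
    (π : ℝ → X → X)
    (hπ : ∀ (R : ℝ) (x : X), π R x = c x (min R (dist b x)))
    (δ : ℝ) (Δ : ℝ) (hΔ : 0 < Δ)
    (hint : ∫ s in Set.Ioi Δ, s / (2 * Real.exp s) < δ) :
    ∀ R' T : ℝ, R' ≥ T + Δ → ∀ x : X,
      dFS (flowFS (c x) T) (flowFS (c (π R' x)) T) < δ := by
  intro R' T hRT x
  have hgeod : ∀ x, IsGeneralizedGeodesic b x (c x) := hc
  have hflow_cont : ∀ y, Continuous (flowFS (c y) T) := fun y =>
    (hgeod y).lipschitzWith.continuous.comp (continuous_add_const T)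
  refine (dFS_le_setIntegral_Ioi hΔ.le (hflow_cont x) (hflow_cont _) fun t => ?_).trans_lt hint
  calc dist (c x (t + T)) (c (π R' x) (t + T)) ≤ max (t + T - R') 0 := by
        rw [hπ]; exact dist_apply_radialProjection_le hX hgeod x R' (t + T)
    _ ≤ max (t - Δ) 0 := max_le_max (by linarith) le_rfl

/-- Flowed generalized geodesics from the basepoint to `x` and to its radial
projection `π_{R'}(x)` are `δ`-close provided `R' ≥ T + Δ`. -/
theorem radial_projection_estimate {X : Type*} [MetricSpace X] [CompleteSpace X]
    (hX : IsCAT0 X) (b : X)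
    (c : X → ℝ → X)
    (hc : ∀ x : X, (∀ t ≤ (0 : ℝ), c x t = b) ∧ (∀ t ≥ dist b x, c x t = x) ∧
      ∀ s ∈ Set.Icc 0 (dist b x), ∀ t ∈ Set.Icc 0 (dist b x),
        dist (c x s) (c x t) = |s - t|)
    (π : ℝ → X → X)
    (hπ : ∀ (R : ℝ) (x : X), π R x = c x (min R (dist b x)))
    (δ : ℝ) (hδ : 0 < δ) (Δ : ℝ) (hΔ : 0 < Δ)
    (hint : ∫ s in Set.Ioi Δ, s / (2 * Real.exp s) < δ) :
    ∀ R' T : ℝ, R' ≥ T + Δ → ∀ x : X,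
      dFS (flowFS (c x) T) (flowFS (c (π R' x)) T) < δ :=
  radial_projection_estimate_general hX b c hc π hπ δ Δ hΔ hint
end
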